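/- The map F defined coordinatewise by F_i(X) = (B_i^{-H_i} + π_i (X_{-i})⁻¹ π_i)^{-H_i} is monotone nondecreasing: if X_i ⪯ Y_i for all i ∈ I, then F_i(X) ⪯ F_i(Y) for all i ∈ I. -/

import Mathlib

open Matrix BigOperators Filter Topology

/-- Orthogonal projection onto the coordinate subspace determined by `S`. -/
noncomputable def proj (K : Type*) [Fintype K] [DecidableEq K] (S : Finset K) :
    Matrix K K ℝ :=
  Matrix.diagonal (fun k => if k ∈ S then (1 : ℝ) else 0)

/-- `B ∈ S_≻^{H}` : symmetric nonnegative definite, vanishing on vectors orthogonal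
to the coordinate subspace `H` given by `S`, and strictly positive definite on `H`. -/
def SPDOn {K : Type*} [Fintype K] [DecidableEq K] (S : Finset K) (B : Matrix K K ℝ) : Prop :=
  B.PosSemidef ∧
  (∀ x : K → ℝ, (∀ j, j ∉ S → x j = 0) → x ≠ 0 → 0 < x ⬝ᵥ (B *ᵥ x)) ∧
  (∀ x : K → ℝ, (∀ j, j ∈ S → x j = 0) → B *ᵥ x = 0)

/-- The inverse of `B` computed on the coordinate subspace given by `S`, extended by zero
(`B^{-H}` in the paper). -/
noncomputable def invOn {K : Type*} [Fintype K] [DecidableEq K] (S : Finset K)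
    (B : Matrix K K ℝ) : Matrix K K ℝ :=
  proj K S * (B + proj K Sᶜ)⁻¹ * proj K S

/-- `A ≺_{H} B` : the difference `B - A` belongs to `S_≻^{H}`. -/
def ltOn {K : Type*} [Fintype K] [DecidableEq K] (S : Finset K) (A B : Matrix K K ℝ) : Prop :=
  SPDOn S (B - A)

/-- The best-response map `F_i(X) = (B_i^{-H_i} + π_i (X_{-i})⁻¹ π_i)^{-H_i}`. -/
noncomputable def Fmap {I K : Type*} [Fintype I] [DecidableEq I] [Fintype K] [DecidableEq K]
    (Ki : I → Finset K) (B : I → Matrix K K ℝ) (X : I → Matrix K K ℝ) (i : I) :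
    Matrix K K ℝ :=
  invOn (Ki i) (invOn (Ki i) (B i) +
    proj K (Ki i) * (∑ j ∈ Finset.univ.erase i, X j)⁻¹ * proj K (Ki i))

/-! The sum `X_{-i} = ∑_{j ≠ i} X_j` is monotone in `X`, and positive definite because every
coordinate is covered by some trader `j ≠ i`. Inversion is antitone on positive definite matrices,
so `B_i^{-H_i} + π_i X_{-i}⁻¹ π_i` is antitone in `X`; the compressed inverse
`M ↦ M^{-H} = π (M + π^⊥)⁻¹ π` reverses the order once more, hence `F_i` is monotone. -/

namespace Matrix

theorem PosDef.inv_sub_inv_posSemidef {n 𝕜 : Type*} [Fintype n] [DecidableEq n]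
    [Field 𝕜] [PartialOrder 𝕜] [StarRing 𝕜] [StarOrderedRing 𝕜]
    {A B : Matrix n n 𝕜} (hA : A.PosDef) (hAB : (B - A).PosSemidef) :
    (A⁻¹ - B⁻¹).PosSemidef := by
  have hB : B.PosDef := by simpa using hA.add_posSemidef hAB
  have := hA.isUnit.invertible
  have := hB.isUnit.invertible
  have := hA.inv.isUnit.invertible
  -- both are Schur complements in the block matrix `[[B, 1], [1, A⁻¹]]`
  have h₁ := PosDef.fromBlocks₁₁ (1 : Matrix n n 𝕜) A⁻¹ hB
  have h₂ := PosDef.fromBlocks₂₂ B (1 : Matrix n n 𝕜) hA.inv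
  simp only [conjTranspose_one, Matrix.mul_one, Matrix.one_mul, inv_inv_of_invertible] at h₁ h₂
  exact h₁.mp (h₂.mpr hAB)

end Matrix

section proj

variable {K : Type*} [Fintype K] [DecidableEq K] (S : Finset K)

lemma proj_mulVec_apply (x : K → ℝ) (k : K) :
    (proj K S *ᵥ x) k = if k ∈ S then x k else 0 := by
  simp [proj, mulVec_diagonal]

lemma conjTranspose_proj : (proj K S)ᴴ = proj K S := by
  simp [proj]

lemma proj_add_proj_compl : proj K S + proj K Sᶜ = 1 := by
  rw [proj, proj, diagonal_add, ← diagonal_one]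
  congr 1 with k
  by_cases hk : k ∈ S <;> simp [hk]

lemma posSemidef_proj : (proj K S).PosSemidef :=
  PosSemidef.diagonal fun k => by by_cases hk : k ∈ S <;> simp [hk]

lemma dotProduct_proj_mul_mul_proj_mulVec (M : Matrix K K ℝ) (x : K → ℝ) :
    x ⬝ᵥ (proj K S * M * proj K S) *ᵥ x = (proj K S *ᵥ x) ⬝ᵥ M *ᵥ (proj K S *ᵥ x) := by
  rw [← mulVec_mulVec, ← mulVec_mulVec, dotProduct_mulVec x, ← mulVec_transpose,
    ← conjTranspose_eq_transpose_of_trivial, conjTranspose_proj]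

variable {S}

lemma Matrix.PosSemidef.proj_mul_mul_proj {M : Matrix K K ℝ} (hM : M.PosSemidef) :
    (proj K S * M * proj K S).PosSemidef := by
  simpa only [conjTranspose_proj] using hM.mul_mul_conjTranspose_same (proj K S)

lemma Matrix.PosDef.proj_mul_mul_proj_add_proj_compl {W : Matrix K K ℝ} (hW : W.PosDef) :
    (proj K S * W * proj K S + proj K Sᶜ).PosDef := by
  have hPWP := hW.posSemidef.proj_mul_mul_proj (S := S)
  refine .of_dotProduct_mulVec_pos (hPWP.add (posSemidef_proj Sᶜ)).1 fun x hx => ?_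
  rw [add_mulVec, dotProduct_add]
  by_cases hPx : proj K S *ᵥ x = 0
  · have hQx : proj K Sᶜ *ᵥ x = x := by
      simpa [add_mulVec, hPx] using congrArg (· *ᵥ x) (proj_add_proj_compl S)
    rw [hQx]
    exact add_pos_of_nonneg_of_pos (hPWP.dotProduct_mulVec_nonneg x)
      (dotProduct_star_self_pos_iff.mpr hx)
  · refine add_pos_of_pos_of_nonneg ?_ ((posSemidef_proj Sᶜ).dotProduct_mulVec_nonneg x)
    simpa only [star_trivial, dotProduct_proj_mul_mul_proj_mulVec] using
      hW.dotProduct_mulVec_pos hPx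

lemma invOn_posSemidef {A : Matrix K K ℝ} (hA : A.PosSemidef) : (invOn S A).PosSemidef :=
  (hA.add (posSemidef_proj Sᶜ)).inv.proj_mul_mul_proj

lemma invOn_sub_invOn_posSemidef {A A' : Matrix K K ℝ} (hA : (A + proj K Sᶜ).PosDef)
    (hAA' : (A' - A).PosSemidef) : (invOn S A - invOn S A').PosSemidef := by
  have hinv := hA.inv_sub_inv_posSemidef (B := A' + proj K Sᶜ) (by simpa using hAA')
  simpa only [invOn, Matrix.mul_sub, Matrix.sub_mul] using hinv.proj_mul_mul_proj

end proj

section SPDOn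

variable {K : Type*} [Fintype K] [DecidableEq K] {S : Finset K} {A : Matrix K K ℝ}

lemma SPDOn.proj_mul_mul_proj (hA : SPDOn S A) : proj K S * A * proj K S = A := by
  have hAP : A * proj K S = A := ext_iff_mulVec.mpr fun v => by
    have hAQ : A *ᵥ (proj K Sᶜ *ᵥ v) = 0 :=
      hA.2.2 _ fun j hj => by simp [proj_mulVec_apply, hj]
    conv_rhs => rw [← one_mulVec v, ← proj_add_proj_compl S, add_mulVec, mulVec_add, hAQ, add_zero]
    rw [mulVec_mulVec]
  have hPA : proj K S * A = A := by
    simpa only [conjTranspose_mul, hA.1.1.eq, conjTranspose_proj] using congrArg conjTranspose hAP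
  rw [hPA, hAP]

lemma SPDOn.dotProduct_mulVec_pos (hA : SPDOn S A) {x : K → ℝ} (hx : proj K S *ᵥ x ≠ 0) :
    0 < x ⬝ᵥ A *ᵥ x := by
  rw [← hA.proj_mul_mul_proj, dotProduct_proj_mul_mul_proj_mulVec]
  exact hA.2.1 _ (fun j hj => by simp [proj_mulVec_apply, hj]) hx

end SPDOn

open Finset in
lemma posDef_sum_erase {I K : Type*} [Fintype I] [DecidableEq I] [Fintype K] [DecidableEq K]
    {Ki : I → Finset K} (hacc : ∀ k : K, 2 ≤ #(univ.filter fun i : I => k ∈ Ki i))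
    {X : I → Matrix K K ℝ} (hX : ∀ i, SPDOn (Ki i) (X i)) (i : I) :
    (∑ j ∈ univ.erase i, X j).PosDef := by
  refine .of_dotProduct_mulVec_pos (posSemidef_sum _ fun j _ => (hX j).1).1 fun x hx => ?_
  obtain ⟨k, hk⟩ := Function.ne_iff.mp hx
  obtain ⟨j, hkj, hji⟩ := exists_mem_ne (hacc k) i
  rw [star_trivial, sum_mulVec, dotProduct_sum]
  refine sum_pos' (fun j _ => by simpa using (hX j).1.dotProduct_mulVec_nonneg x)
    ⟨j, mem_erase.mpr ⟨hji, mem_univ _⟩, (hX j).dotProduct_mulVec_pos fun h => hk ?_⟩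
  simpa [proj_mulVec_apply, (mem_filter.mp hkj).2] using congrFun h k

theorem stmt_5_general {I K : Type*} [Fintype I] [DecidableEq I] [Fintype K] [DecidableEq K]
    (Ki : I → Finset K)
    (hacc : ∀ k : K, 2 ≤ (Finset.univ.filter (fun i : I => k ∈ Ki i)).card)
    (B : I → Matrix K K ℝ) (hB : ∀ i, SPDOn (Ki i) (B i))
    (X Y : I → Matrix K K ℝ)
    (hX : ∀ i, SPDOn (Ki i) (X i))
    (hXY : ∀ i, (Y i - X i).PosSemidef) :
    ∀ i, (Fmap Ki B Y i - Fmap Ki B X i).PosSemidef := by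
  intro i
  have hZX := posDef_sum_erase hacc hX i
  have hZ : (∑ j ∈ Finset.univ.erase i, Y j - ∑ j ∈ Finset.univ.erase i, X j).PosSemidef := by
    rw [← Finset.sum_sub_distrib]
    exact posSemidef_sum _ fun j _ => hXY j
  have hZY : (∑ j ∈ Finset.univ.erase i, Y j).PosDef := by simpa using hZX.add_posSemidef hZ
  refine invOn_sub_invOn_posSemidef ?_ ?_
  · rw [add_assoc]
    exact .posSemidef_add (invOn_posSemidef (hB i).1) hZY.inv.proj_mul_mul_proj_add_proj_compl
  · simpa only [add_sub_add_left_eq_sub, Matrix.mul_sub, Matrix.sub_mul] using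
      (hZX.inv_sub_inv_posSemidef hZ).proj_mul_mul_proj

/-- The best-response map `F` is monotone nondecreasing in the componentwise Loewner order. -/
theorem stmt_5 {I K : Type*} [Fintype I] [DecidableEq I] [Fintype K] [DecidableEq K]
    (Ki : I → Finset K)
    (hacc : ∀ k : K, 2 ≤ (Finset.univ.filter (fun i : I => k ∈ Ki i)).card)
    (B : I → Matrix K K ℝ) (hB : ∀ i, SPDOn (Ki i) (B i))
    (X Y : I → Matrix K K ℝ)
    (hX : ∀ i, SPDOn (Ki i) (X i)) (hY : ∀ i, SPDOn (Ki i) (Y i))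
    (hXY : ∀ i, (Y i - X i).PosSemidef) :
    ∀ i, (Fmap Ki B Y i - Fmap Ki B X i).PosSemidef :=
  stmt_5_general Ki hacc B hB X Y hX hXY
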